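/- arXiv:0906.1023 — 7 statements merged into one kernel-verified Lean document; each statement's English description precedes it below -/
import Mathlib

section
/- If M is a direct sum of R-modules M_i over an infinite index set I, then M is a countable union of proper submodules. -/
/-!
Fix distinct indices `i₀, i₁, …` in `ι`. The kernels of the coordinate projections onto `M iₙ` are
proper since `M iₙ ≠ 0`, and they cover the direct sum because an element has only finitely many
nonzero coordinates.
-/

open Function

theorem DFinsupp.exists_apply_comp_eq_zero {ι α : Type*} [Infinite α] {β : ι → Type*}
    [∀ i, Zero (β i)] {e : α → ι} (he : Injective e) (x : Π₀ i, β i) : ∃ a, x (e a) = 0 := by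
  classical
  obtain ⟨a, ha⟩ := (x.support.finite_toSet.preimage he.injOn).infinite_compl.nonempty
  exact ⟨a, DFinsupp.notMem_support_iff.mp ha⟩

namespace DirectSum

variable {R : Type*} [Semiring R] {ι : Type*} (M : ι → Type*) [∀ i, AddCommMonoid (M i)]
  [∀ i, Module R (M i)]

theorem ker_component_ne_top [DecidableEq ι] (i : ι) [Nontrivial (M i)] :
    LinearMap.ker (component R ι M i) ≠ ⊤ := by
  obtain ⟨m, hm⟩ := exists_ne (0 : M i)
  intro h
  have hm_ker : lof R ι M i m ∈ LinearMap.ker (component R ι M i) := h ▸ Submodule.mem_top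
  exact hm (by simpa using hm_ker)

theorem iUnion_ker_component_comp_eq_univ {α : Type*} [Infinite α] {e : α → ι}
    (he : Injective e) :
    ⋃ a, (LinearMap.ker (component R ι M (e a)) : Set (⨁ i, M i)) = Set.univ :=
  Set.eq_univ_of_forall fun x => Set.mem_iUnion.mpr (DFinsupp.exists_apply_comp_eq_zero he x)

end DirectSum

theorem directSum_infinite_countable_union_proper_submodules
    {R : Type*} [CommRing R] {ι : Type*} [Infinite ι]
    (M : ι → Type*) [∀ i, AddCommGroup (M i)] [∀ i, Module R (M i)]
    [∀ i, Nontrivial (M i)] :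
    ∃ C : ℕ → Submodule R (DirectSum ι M),
      (∀ n, C n ≠ ⊤) ∧ (⋃ n, (C n : Set (DirectSum ι M))) = Set.univ := by
  classical
  let e : ℕ ↪ ι := Infinite.natEmbedding ι
  exact ⟨fun n => LinearMap.ker (DirectSum.component R ι M (e n)),
    fun n => DirectSum.ker_component_ne_top M (e n),
    DirectSum.iUnion_ker_component_comp_eq_univ M e.injective⟩
end

section
/- Let (R,m) be a local ring with residue field F = R/m, and let n be a positive integer with n ≤ |F| (n finite). Then no R-module M is the union of n proper R-submodules. -/
/-!
Pass to a minimal subcover `C j`, `j ∈ s`. Minimality gives `b ∈ C j` lying in no other member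
of the subcover, and properness gives `a ∉ C j`. Lift the elements of the residue field to
`R`; their differences are units. The points `a + r • b` then avoid `C j`, and no other member
can contain two of them, since it would contain `b`. So the residue field injects into `s \ {j}`.
-/

open Cardinal IsLocalRing

universe u v w

namespace Submodule

variable {R : Type u} [CommRing R] [IsLocalRing R] {M : Type v} [AddCommGroup M] [Module R M]

theorem lift_mk_residueField_le_mk_diff_singleton {ι : Type w} (C : ι → Submodule R M)
    (s : Set ι) (hcover : ∀ x, ∃ i ∈ s, x ∈ C i) {j : ι} (hj : C j ≠ ⊤) {b : M}
    (hb : b ∈ C j) (hb_not_mem : ∀ k ∈ s, k ≠ j → b ∉ C k) :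
    lift.{w} #(ResidueField R) ≤ lift.{u} #↥(s \ {j}) := by
  obtain ⟨a, ha⟩ := SetLike.exists_not_mem_of_ne_top (C j) hj
  let f : ResidueField R → R := Function.surjInv residue_surjective
  have hf : ∀ r, residue R (f r) = r := Function.surjInv_eq residue_surjective
  choose g hgs hg using fun r ↦ hcover (a + f r • b)
  have hgj : ∀ r, g r ≠ j := by
    intro r h
    exact ha (((C j).add_mem_iff_left ((C j).smul_mem _ hb)).mp (h ▸ hg r))
  refine lift_mk_le_lift_mk_of_injective
    (f := fun r ↦ (⟨g r, hgs r, hgj r⟩ : ↥(s \ {j}))) fun r t hrt ↦ ?_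
  have hgrt : g r = g t := congrArg Subtype.val hrt
  by_contra hne
  have hunit : IsUnit (f r - f t) := by
    rw [← residue_ne_zero_iff_isUnit, map_sub, hf, hf, sub_ne_zero]
    exact hne
  have hdiff : (f r - f t) • b ∈ C (g r) := by
    have := (C (g r)).sub_mem (hg r) (hgrt ▸ hg t)
    rwa [add_sub_add_left_eq_sub, ← sub_smul] at this
  exact hb_not_mem _ (hgs r) (hgj r) (((C (g r)).smul_mem_iff_of_isUnit hunit).mp hdiff)

theorem mk_residueField_lt_of_iUnion_eq_univ {ι : Type w} [Finite ι] (C : ι → Submodule R M)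
    (hC : ∀ i, C i ≠ ⊤) (hcover : ⋃ i, (C i : Set M) = Set.univ) :
    #(ResidueField R) < Nat.card ι := by
  classical
  have := Fintype.ofFinite ι
  obtain ⟨s, hs_cover, hs_min⟩ :=
    wellFounded_lt.has_min {s : Finset ι | ∀ x, ∃ i ∈ s, x ∈ C i}
      ⟨Finset.univ, fun x ↦ by simpa using Set.eq_univ_iff_forall.mp hcover x⟩
  obtain ⟨j, hjs, -⟩ := hs_cover 0
  obtain ⟨b, hb_not_mem⟩ : ∃ b, ∀ i ∈ s.erase j, b ∉ C i := by
    simpa using mt (hs_min (s.erase j)) (not_not.mpr (Finset.erase_ssubset hjs))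
  have hb : b ∈ C j := by
    obtain ⟨i, his, hbi⟩ := hs_cover b
    by_contra hbj
    exact hb_not_mem i (Finset.mem_erase.mpr ⟨fun h ↦ hbj (h ▸ hbi), his⟩) hbi
  have key := lift_mk_residueField_le_mk_diff_singleton C s (by simpa using hs_cover) (hC j) hb
    fun k hks hkj ↦ hb_not_mem k (Finset.mem_erase.mpr ⟨hkj, hks⟩)
  rw [← Finset.coe_erase, Finset.coe_sort_coe, mk_coe_finset, lift_natCast] at key
  have hs_card : (s.erase j).card < Nat.card ι :=
    Nat.card_eq_fintype_card (α := ι) ▸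
      (Finset.card_erase_lt_of_mem hjs).trans_le (Finset.card_le_univ s)
  rw [← lift_lt.{_, w}, lift_natCast]
  exact key.trans_lt (Nat.cast_lt.mpr hs_card)

end Submodule

theorem not_union_of_le_card_residueField_proper_submodules_general
    {R : Type*} [CommRing R] [IsLocalRing R]
    {M : Type*} [AddCommGroup M] [Module R M]
    (n : ℕ)
    (hcard : (n : Cardinal) ≤ Cardinal.mk (IsLocalRing.ResidueField R))
    (C : Fin n → Submodule R M) (hC : ∀ i, C i ≠ ⊤) :
    (⋃ i, (C i : Set M)) ≠ Set.univ := fun hcover ↦ by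
  have := Submodule.mk_residueField_lt_of_iUnion_eq_univ C hC hcover
  rw [Nat.card_fin] at this
  exact this.not_ge hcard

theorem not_union_of_le_card_residueField_proper_submodules
    {R : Type*} [CommRing R] [IsLocalRing R]
    {M : Type*} [AddCommGroup M] [Module R M]
    (n : ℕ) (hn : 0 < n)
    (hcard : (n : Cardinal) ≤ Cardinal.mk (IsLocalRing.ResidueField R))
    (C : Fin n → Submodule R M) (hC : ∀ i, C i ≠ ⊤) :
    (⋃ i, (C i : Set M)) ≠ Set.univ :=
  not_union_of_le_card_residueField_proper_submodules_general n hcard C hC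
end

section
/- Let (R,m) be a local ring whose maximal ideal contains a non-zerodivisor p, and let M = ⨁_{n∈ℕ} R·m_n be a free module on countably many generators. Let N be the submodule generated by {m_n − p·m_{n+1} : n ∈ ℕ}. Then N is a proper submodule of M but N + mM = M. -/
/-!
Sending `mₙ ↦ p⁻ⁿ` defines an `R`-linear map `M → R[1/p]` that kills every `mₙ - p mₙ₊₁` but
sends `m₀` to `1`; since a non-zerodivisor of a nontrivial ring is not nilpotent, `R[1/p] ≠ 0`
and so `N ≠ M`. On the other hand `mₙ = (mₙ - p mₙ₊₁) + p mₙ₊₁ ∈ N + pM`, so `N + mM = M`.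
-/

open Submodule

namespace Finsupp

variable {R : Type*} [CommRing R]

noncomputable def shiftRelations (p : R) : Submodule R (ℕ →₀ R) :=
  span R (Set.range fun n : ℕ => single n 1 - p • single (n + 1) 1)

theorem shiftRelations_sup_smul_top {p : R} {I : Ideal R} (hp : p ∈ I) :
    shiftRelations p ⊔ I • ⊤ = ⊤ := by
  refine eq_top_iff.2 <| (Finsupp.basisSingleOne : Module.Basis ℕ R _).span_eq.ge.trans ?_
  rw [span_le, coe_basisSingleOne]
  rintro _ ⟨n, rfl⟩
  beta_reduce
  rw [← sub_add_cancel (single n (1 : R)) (p • single (n + 1) 1)]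
  exact add_mem (mem_sup_left (subset_span ⟨n, rfl⟩)) (mem_sup_right (smul_mem_smul hp trivial))

noncomputable def toLocalizationAway (p : R) : (ℕ →₀ R) →ₗ[R] Localization.Away p :=
  linearCombination R fun n => IsLocalization.Away.invSelf p ^ n

theorem toLocalizationAway_single_one (p : R) (n : ℕ) :
    toLocalizationAway p (single n 1) = IsLocalization.Away.invSelf p ^ n := by
  simp [toLocalizationAway]

theorem shiftRelations_le_ker_toLocalizationAway (p : R) :
    shiftRelations p ≤ LinearMap.ker (toLocalizationAway p) := by
  rw [shiftRelations, span_le]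
  rintro _ ⟨n, rfl⟩
  rw [SetLike.mem_coe, LinearMap.mem_ker, map_sub, map_smul, toLocalizationAway_single_one,
    toLocalizationAway_single_one, pow_succ, Algebra.smul_def, mul_left_comm,
    IsLocalization.Away.mul_invSelf, mul_one, sub_self]

theorem shiftRelations_ne_top {p : R} (hp : ¬IsNilpotent p) : shiftRelations p ≠ ⊤ := by
  have : Nontrivial (Localization.Away p) := by
    rw [← not_subsingleton_iff_nontrivial, IsLocalization.subsingleton_iff (M := .powers p)]
    exact hp
  intro htop
  have h0 : single 0 (1 : R) ∈ shiftRelations p := htop ▸ mem_top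
  have h := shiftRelations_le_ker_toLocalizationAway p h0
  rw [LinearMap.mem_ker, toLocalizationAway_single_one, pow_zero] at h
  exact one_ne_zero h

end Finsupp

theorem not_isNilpotent_of_mem_nonZeroDivisors {R : Type*} [MonoidWithZero R] [Nontrivial R]
    {p : R} (hp : p ∈ nonZeroDivisors R) : ¬IsNilpotent p :=
  fun ⟨k, hk⟩ => nonZeroDivisors.ne_zero (pow_mem hp k) hk

theorem counterexample_nakayama_not_fg
    {R : Type*} [CommRing R] [IsLocalRing R]
    (p : R) (hp : p ∈ IsLocalRing.maximalIdeal R) (hreg : p ∈ nonZeroDivisors R) :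
    Submodule.span R (Set.range fun n : ℕ =>
        (Finsupp.single n (1 : R) - p • Finsupp.single (n + 1) (1 : R) : ℕ →₀ R)) ≠ ⊤ ∧
      Submodule.span R (Set.range fun n : ℕ =>
        (Finsupp.single n (1 : R) - p • Finsupp.single (n + 1) (1 : R) : ℕ →₀ R)) ⊔
        (IsLocalRing.maximalIdeal R) • (⊤ : Submodule R (ℕ →₀ R)) = ⊤ :=
  ⟨Finsupp.shiftRelations_ne_top (not_isNilpotent_of_mem_nonZeroDivisors hreg),
    Finsupp.shiftRelations_sup_smul_top hp⟩
end

section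
/- Let (R,m) be a local ring with finite residue field F = R/m, and M a direct sum of at least two nonzero cyclic R-modules. Then M is a union of |F| + 1 proper submodules, but not of any |F| or fewer proper submodules. -/
/-!
Projecting a direct sum of two nonzero cyclic summands onto `F × F` (through the two residue
maps), the `|F| + 1` lines of `F × F` pull back to a cover by proper submodules.

Conversely, in an irredundant cover `C` of `M` by proper submodules pick `y ∈ C j₀` lying in no
other member and `x ∉ C j₀`. For lifts `r` of the elements of `F`, the points `x + r • y` avoid
`C j₀`, and two of them in a common member `C j` would put `(r - r') • y`, hence `y` (as `r - r'`
is a unit), in `C j`. So the `|F|` points need `|F|` further members.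
-/

open IsLocalRing Function

theorem exists_proper_cover_prod_self (K : Type*) [Field K] :
    ∃ C : Option K → Submodule K (K × K),
      (∀ o, C o ≠ ⊤) ∧ ⋃ o, (C o : Set (K × K)) = Set.univ := by
  let L : Option K → K × K →ₗ[K] K := fun o =>
    o.elim (LinearMap.fst K K K) fun c => LinearMap.snd K K K - c • LinearMap.fst K K K
  refine ⟨fun o => LinearMap.ker (L o), fun o hL => ?_, Set.eq_univ_of_forall fun v => ?_⟩
  · rw [LinearMap.ker_eq_top] at hL
    cases o with
    | none => simpa [L] using LinearMap.congr_fun hL (1, 0)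
    | some c => simpa [L] using LinearMap.congr_fun hL (0, 1)
  · simp only [Set.mem_iUnion, SetLike.mem_coe, LinearMap.mem_ker]
    by_cases hv : v.1 = 0
    · exact ⟨none, hv⟩
    · exact ⟨some (v.2 / v.1), by simp [L, hv]⟩

theorem DirectSum.component_prod_surjective (R : Type*) [Semiring R] {ι : Type*} [DecidableEq ι]
    (M : ι → Type*) [∀ i, AddCommMonoid (M i)] [∀ i, Module R (M i)] {i j : ι} (hij : i ≠ j) :
    Surjective ((component R ι M i).prod (component R ι M j)) := fun ⟨a, b⟩ =>
  ⟨lof R ι M i a + lof R ι M j b, by simp [component.of, hij, hij.symm]⟩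

theorem Submodule.comap_proper_cover_of_surjective {R M N κ : Type*} [Semiring R] [AddCommMonoid M]
    [AddCommMonoid N] [Module R M] [Module R N] {f : M →ₗ[R] N} (hf : Surjective f)
    {C : κ → Submodule R N} (hC : ∀ j, C j ≠ ⊤) (hcover : ⋃ j, (C j : Set N) = Set.univ) :
    (∀ j, (C j).comap f ≠ ⊤) ∧ ⋃ j, ((C j).comap f : Set M) = Set.univ := by
  refine ⟨fun j h => hC j ?_, ?_⟩
  · exact comap_injective_of_surjective hf (h.trans (comap_top f).symm)
  · simp_rw [comap_coe, ← Set.preimage_iUnion, hcover, Set.preimage_univ]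

namespace IsLocalRing

variable {R : Type*} [CommRing R] [IsLocalRing R] {M : Type*} [AddCommGroup M] [Module R M]

theorem mem_of_sub_smul_mem_of_residue_ne {N : Submodule R M} {r s : R}
    (hrs : residue R r ≠ residue R s) {y : M} (hy : (r - s) • y ∈ N) : y ∈ N := by
  refine (N.smul_mem_iff_of_isUnit ?_).mp hy
  rwa [← residue_ne_zero_iff_isUnit, map_sub, sub_ne_zero]

theorem card_residueField_lt_card_of_iUnion_eq_univ_of_mem_only {κ : Type*} [Finite κ]
    {C : κ → Submodule R M} (hcover : ⋃ j, (C j : Set M) = Set.univ) {j₀ : κ} (hj₀ : C j₀ ≠ ⊤)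
    {y : M} (hy : y ∈ C j₀) (hy' : ∀ j ≠ j₀, y ∉ C j) :
    Nat.card (ResidueField R) < Nat.card κ := by
  obtain ⟨x, hx⟩ : ∃ x, x ∉ C j₀ := by simpa [Submodule.eq_top_iff'] using hj₀
  obtain ⟨s, hs⟩ : ∃ s : ResidueField R → R, ∀ a, residue R (s a) = a :=
    ⟨surjInv residue_surjective, surjInv_eq residue_surjective⟩
  choose f hf using fun a => Set.iUnion_eq_univ_iff.mp hcover (x + s a • y)
  have hf₀ (a) : f a ≠ j₀ := by
    intro h
    have := (C j₀).sub_mem (h ▸ hf a) ((C j₀).smul_mem (s a) hy)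
    exact hx (by rwa [add_sub_cancel_right] at this)
  have hf_inj : Injective f := by
    intro a b hab
    by_contra hne
    have hdiff : (s a - s b) • y ∈ C (f b) := by
      have := (C (f b)).sub_mem (hab ▸ hf a) (hf b)
      rwa [add_sub_add_left_eq_sub, ← sub_smul] at this
    exact hy' _ (hf₀ b) (mem_of_sub_smul_mem_of_residue_ne (by rwa [hs, hs]) hdiff)
  calc Nat.card (ResidueField R) ≤ Nat.card {j // j ≠ j₀} :=
        Nat.card_le_card_of_injective (fun a => ⟨f a, hf₀ a⟩) fun a b h =>
          hf_inj (congrArg Subtype.val h)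
    _ < Nat.card κ := Finite.card_subtype_lt (p := (· ≠ j₀)) (not_not.mpr rfl)

theorem card_residueField_lt_card_of_iUnion_eq_univ {κ : Type*} [Finite κ]
    {C : κ → Submodule R M} (hC : ∀ j, C j ≠ ⊤) (hcover : ⋃ j, (C j : Set M) = Set.univ) :
    Nat.card (ResidueField R) < Nat.card κ := by
  induction hk : Nat.card κ using Nat.strong_induction_on generalizing κ C with
  | _ k ih =>
  by_cases hred : ∃ j₀, ∀ y ∈ C j₀, ∃ j ≠ j₀, y ∈ C j
  · obtain ⟨j₀, hj₀⟩ := hred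
    have hsub : ⋃ j : {j // j ≠ j₀}, (C j : Set M) = Set.univ := by
      refine Set.iUnion_eq_univ_iff.mpr fun y => ?_
      obtain ⟨j, hj⟩ := Set.iUnion_eq_univ_iff.mp hcover y
      by_cases h : j = j₀
      · obtain ⟨j', hj', hy⟩ := hj₀ y (h ▸ hj)
        exact ⟨⟨j', hj'⟩, hy⟩
      · exact ⟨⟨j, h⟩, hj⟩
    have hlt : Nat.card {j // j ≠ j₀} < k := hk ▸ Finite.card_subtype_lt (not_not.mpr rfl)
    exact (ih _ hlt (fun j : {j // j ≠ j₀} => hC j) hsub rfl).trans hlt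
  · push Not at hred
    obtain ⟨j₀, -⟩ := Set.iUnion_eq_univ_iff.mp hcover 0
    obtain ⟨y, hy, hy'⟩ := hred j₀
    exact hk ▸ card_residueField_lt_card_of_iUnion_eq_univ_of_mem_only hcover (hC j₀) hy hy'

end IsLocalRing

theorem local_ring_cover_bound
    {R : Type*} [CommRing R] [IsLocalRing R] [Finite (IsLocalRing.ResidueField R)]
    {ι : Type*} [Nontrivial ι]
    (J : ι → Ideal R) (hJ : ∀ i, J i ≠ ⊤) :
    (∃ C : Fin (Nat.card (IsLocalRing.ResidueField R) + 1) →
        Submodule R (DirectSum ι (fun i => R ⧸ J i)),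
      (∀ j, C j ≠ ⊤) ∧ (⋃ j, (C j : Set (DirectSum ι (fun i => R ⧸ J i)))) = Set.univ) ∧
    (∀ (k : ℕ), k ≤ Nat.card (IsLocalRing.ResidueField R) →
      ∀ C : Fin k → Submodule R (DirectSum ι (fun i => R ⧸ J i)),
        (∀ j, C j ≠ ⊤) →
        (⋃ j, (C j : Set (DirectSum ι (fun i => R ⧸ J i)))) ≠ Set.univ) := by
  classical
  refine ⟨?_, fun k hk C hC hcover => ?_⟩
  · obtain ⟨i₀, i₁, hi⟩ := exists_pair_ne ι
    let π (i : ι) : R ⧸ J i →ₗ[R] ResidueField R := Submodule.factor (le_maximalIdeal (hJ i))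
    have hφ : Surjective ((π i₀).prodMap (π i₁) ∘ₗ
        (DirectSum.component R ι (fun i => R ⧸ J i) i₀).prod
          (DirectSum.component R ι _ i₁)) := by
      rw [LinearMap.coe_comp, LinearMap.coe_prodMap]
      exact ((Submodule.factor_surjective _).prodMap (Submodule.factor_surjective _)).comp
          (DirectSum.component_prod_surjective R _ hi)
    obtain ⟨L, hL, hLcover⟩ := exists_proper_cover_prod_self (ResidueField R)
    obtain ⟨hC, hcover⟩ := Submodule.comap_proper_cover_of_surjective hφ
      (C := fun o => (L o).restrictScalars R) (by simpa using hL) hLcover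
    let e : Fin (Nat.card (ResidueField R) + 1) ≃ Option (ResidueField R) :=
      ((Finite.equivFin _).trans (finCongr Finite.card_option)).symm
    exact ⟨_, fun j => hC (e j), (e.surjective.iUnion_comp _).trans hcover⟩
  · have := card_residueField_lt_card_of_iUnion_eq_univ hC hcover
    rw [Nat.card_fin] at this
    omega
end

section
/- Let R be a PID with fraction field F, R ≠ F, and p a nonzero prime of R. Every R-submodule of the Prüfer module M_p = R[1/p]/R is either 0, M_p itself, or of the form R·(1/p^n)/R for some n ≥ 1; in particular the submodules of M_p form a chain under inclusion. -/
/-!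
The `p ^ n`-torsion of `K ⧸ R` is the cyclic module generated by `p⁻¹ ^ n`. In a module whose
`p ^ n`-torsion submodules `T n` are all cyclic, an element `x ∈ T (m + 1) \ T m` generates
`T (m + 1)`: writing `x = r • y` for a generator `y`, `p ∤ r`, so `r` is invertible modulo
`p ^ (m + 1)` by Bézout. Hence a submodule `N` of the `p`-primary part containing an element of
exact order `p ^ j` contains `T j`, and `N` is either all of `⨆ n, T n` or `T m` for the largest
`m` with `T m ≤ N`.
-/

namespace Submodule

section torsionBy

variable {R M : Type*} [CommRing R] [AddCommGroup M] [Module R M]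

theorem torsionBy_pow_mono (p : R) : Monotone fun n : ℕ => torsionBy R M (p ^ n) :=
  fun _ _ hmn => torsionBy_le_torsionBy_of_dvd _ _ (pow_dvd_pow p hmn)

variable [IsBezout R] {p : R}

theorem torsionBy_pow_succ_le_span_of_notMem (hp : Irreducible p) {m : ℕ} {x y : M}
    (hy : torsionBy R M (p ^ (m + 1)) = span R {y}) (hx : x ∈ torsionBy R M (p ^ (m + 1)))
    (hx' : x ∉ torsionBy R M (p ^ m)) :
    torsionBy R M (p ^ (m + 1)) ≤ span R {x} := by
  have hy₀ : p ^ (m + 1) • y = 0 := (mem_torsionBy_iff _ _).mp (hy ▸ mem_span_singleton_self y)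
  obtain ⟨r, rfl⟩ := mem_span_singleton.mp (hy ▸ hx)
  have hr : ¬ p ∣ r := by
    rintro ⟨t, rfl⟩
    refine hx' ((mem_torsionBy_iff _ _).mpr ?_)
    rw [smul_smul, show p ^ m * (p * t) = t * p ^ (m + 1) by ring, mul_smul, hy₀, smul_zero]
  obtain ⟨a, b, hab⟩ := hp.coprime_pow_of_not_dvd (m + 1) hr
  have hy_eq : a • r • y = y := by
    rw [← mul_smul, ← add_zero ((a * r) • y), ← smul_zero b, ← hy₀, smul_smul, ← add_smul, hab,
      one_smul]
  rw [hy, span_singleton_le_iff_mem]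
  exact mem_span_singleton.mpr ⟨a, hy_eq⟩

theorem mem_torsionBy_pow_of_not_le (hp : Irreducible p)
    (hcyc : ∀ n, ∃ y : M, torsionBy R M (p ^ n) = span R {y}) {N : Submodule R M}
    (hN : N ≤ ⨆ n, torsionBy R M (p ^ n)) {m : ℕ} (hm : ¬ torsionBy R M (p ^ (m + 1)) ≤ N)
    {x : M} (hx : x ∈ N) :
    x ∈ torsionBy R M (p ^ m) := by
  by_contra hxm
  have hnot : ∀ n, m ≤ n → x ∉ torsionBy R M (p ^ n) := by
    intro n hmn
    induction n, hmn using Nat.le_induction with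
    | base => exact hxm
    | succ n hmn ih =>
      intro hxn
      obtain ⟨y, hy⟩ := hcyc (n + 1)
      have hle := torsionBy_pow_succ_le_span_of_notMem hp hy hxn ih
      exact hm ((torsionBy_pow_mono p (by omega)).trans
        (hle.trans ((span_singleton_le_iff_mem _ _).mpr hx)))
  obtain ⟨n, hn⟩ := (mem_iSup_of_directed _ (torsionBy_pow_mono p).directed_le).mp (hN hx)
  exact hnot (max n m) (le_max_right _ _) (torsionBy_pow_mono p (le_max_left _ _) hn)

theorem eq_iSup_torsionBy_pow_or_eq_torsionBy_pow (hp : Irreducible p)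
    (hcyc : ∀ n, ∃ y : M, torsionBy R M (p ^ n) = span R {y}) {N : Submodule R M}
    (hN : N ≤ ⨆ n, torsionBy R M (p ^ n)) :
    N = ⨆ n, torsionBy R M (p ^ n) ∨ ∃ m, N = torsionBy R M (p ^ m) := by
  classical
  by_cases h : ∀ n, torsionBy R M (p ^ n) ≤ N
  · exact .inl (hN.antisymm (iSup_le h))
  push Not at h
  obtain ⟨m, hm⟩ : ∃ m, Nat.find h = m + 1 := Nat.exists_eq_succ_of_ne_zero fun h0 => by
    simpa [h0, torsionBy_one] using Nat.find_spec h
  refine .inr ⟨m, le_antisymm (fun x hx => ?_) ?_⟩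
  · exact mem_torsionBy_pow_of_not_le hp hcyc hN (hm ▸ Nat.find_spec h) hx
  · exact not_not.mp (Nat.find_min h (by omega))

theorem le_total_of_le_iSup_torsionBy_pow (hp : Irreducible p)
    (hcyc : ∀ n, ∃ y : M, torsionBy R M (p ^ n) = span R {y}) {N N' : Submodule R M}
    (hN : N ≤ ⨆ n, torsionBy R M (p ^ n)) (hN' : N' ≤ ⨆ n, torsionBy R M (p ^ n)) :
    N ≤ N' ∨ N' ≤ N := by
  rcases eq_iSup_torsionBy_pow_or_eq_torsionBy_pow hp hcyc hN with rfl | ⟨a, rfl⟩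
  · exact .inr hN'
  rcases eq_iSup_torsionBy_pow_or_eq_torsionBy_pow hp hcyc hN' with rfl | ⟨b, rfl⟩
  · exact .inl hN
  exact (le_total a b).imp (fun h => torsionBy_pow_mono p h) (fun h => torsionBy_pow_mono p h)

end torsionBy

theorem torsionBy_pow_quotient_span_one_eq_span_inv_pow {R K : Type*} [CommRing R] [Field K]
    [Algebra R K] {p : R} (hp : algebraMap R K p ≠ 0) (n : ℕ) :
    torsionBy R (K ⧸ span R {(1 : K)}) (p ^ n) =
      span R {Quotient.mk ((algebraMap R K p)⁻¹ ^ n)} := by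
  refine le_antisymm (fun x hx => ?_) ?_
  · obtain ⟨f, rfl⟩ := Quotient.mk_surjective _ x
    rw [mem_torsionBy_iff, ← Quotient.mk_smul, Quotient.mk_eq_zero, mem_span_singleton] at hx
    obtain ⟨r, hr⟩ := hx
    rw [Algebra.smul_def, Algebra.smul_def, mul_one, map_pow] at hr
    refine mem_span_singleton.mpr ⟨r, ?_⟩
    rw [← Quotient.mk_smul, Algebra.smul_def, hr, inv_pow, mul_comm,
      inv_mul_cancel_left₀ (pow_ne_zero n hp)]
  · rw [span_singleton_le_iff_mem, mem_torsionBy_iff, ← Quotient.mk_smul, Algebra.smul_def,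
      map_pow, ← mul_pow, mul_inv_cancel₀ hp, one_pow, Quotient.mk_eq_zero]
    exact mem_span_singleton_self 1

end Submodule

theorem prufer_submodules_classification_and_chain_general
    (R : Type*) [CommRing R] [IsDomain R] [IsPrincipalIdealRing R]
    (p : R) (hp : Prime p) :
    ∀ Mp : Submodule R ((FractionRing R) ⧸ Submodule.span R {(1 : FractionRing R)}),
      Mp = ⨆ n : ℕ, Submodule.torsionBy R
            ((FractionRing R) ⧸ Submodule.span R {(1 : FractionRing R)}) (p ^ n) →
      (∀ N : Submodule R ((FractionRing R) ⧸ Submodule.span R {(1 : FractionRing R)}),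
          N ≤ Mp →
          (N = ⊥ ∨ N = Mp ∨ ∃ n : ℕ, 1 ≤ n ∧
            N = Submodule.span R
              {Submodule.Quotient.mk ((algebraMap R (FractionRing R) p)⁻¹ ^ n)})) ∧
      (∀ N N' : Submodule R ((FractionRing R) ⧸ Submodule.span R {(1 : FractionRing R)}),
          N ≤ Mp → N' ≤ Mp → N ≤ N' ∨ N' ≤ N) := by
  rintro Mp rfl
  have hpK : algebraMap R (FractionRing R) p ≠ 0 :=
    (map_ne_zero_iff _ (IsFractionRing.injective R _)).mpr hp.ne_zero
  have hcyc (n : ℕ) : ∃ y, Submodule.torsionBy R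
      (FractionRing R ⧸ Submodule.span R {(1 : FractionRing R)}) (p ^ n) = Submodule.span R {y} :=
    ⟨_, Submodule.torsionBy_pow_quotient_span_one_eq_span_inv_pow hpK n⟩
  refine ⟨fun N hN => ?_, fun N N' =>
    Submodule.le_total_of_le_iSup_torsionBy_pow hp.irreducible hcyc⟩
  rcases Submodule.eq_iSup_torsionBy_pow_or_eq_torsionBy_pow hp.irreducible hcyc hN with
    h | ⟨_ | n, rfl⟩
  · exact .inr (.inl h)
  · exact .inl (by rw [pow_zero, Submodule.torsionBy_one])
  · exact .inr (.inr
      ⟨n + 1, by omega, Submodule.torsionBy_pow_quotient_span_one_eq_span_inv_pow hpK _⟩)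

theorem prufer_submodules_classification_and_chain
    (R : Type*) [CommRing R] [IsDomain R] [IsPrincipalIdealRing R]
    (hnf : ¬ IsField R) (p : R) (hp : Prime p) :
    ∀ Mp : Submodule R ((FractionRing R) ⧸ Submodule.span R {(1 : FractionRing R)}),
      Mp = ⨆ n : ℕ, Submodule.torsionBy R
            ((FractionRing R) ⧸ Submodule.span R {(1 : FractionRing R)}) (p ^ n) →
      (∀ N : Submodule R ((FractionRing R) ⧸ Submodule.span R {(1 : FractionRing R)}),
          N ≤ Mp →
          (N = ⊥ ∨ N = Mp ∨ ∃ n : ℕ, 1 ≤ n ∧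
            N = Submodule.span R
              {Submodule.Quotient.mk ((algebraMap R (FractionRing R) p)⁻¹ ^ n)})) ∧
      (∀ N N' : Submodule R ((FractionRing R) ⧸ Submodule.span R {(1 : FractionRing R)}),
          N ≤ Mp → N' ≤ Mp → N ≤ N' ∨ N' ≤ N) :=
  prufer_submodules_classification_and_chain_general R p hp
end

section
/- Let R be a PID with fraction field F, R ≠ F. Then F, as an R-module, is not a union of finitely many proper R-submodules, but it is a countable union of proper R-submodules. -/
/-!
By Neumann's lemma, if finitely many submodules cover `F`, one of them has finite index. But
multiplication by any `a ≠ 0` is onto on `F`, hence on every quotient of `F`, and on a finite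
quotient it is then injective as well; since `R` is infinite, every element of a finite module is
killed by some `a ≠ 0`, so a finite quotient of `F` is trivial. For the countable cover, fix a
prime `p` of `R` and take the fractions of `p`-adic valuation at least `-n`, for `n ∈ ℕ`.
-/

open Function

theorem Module.subsingleton_of_finite_of_smul_surjective {R M : Type*} [Ring R] [Infinite R]
    [AddCommGroup M] [Module R M] [Finite M]
    (hdiv : ∀ a : R, a ≠ 0 → Surjective (a • · : M → M)) : Subsingleton M := by
  refine subsingleton_of_forall_eq 0 fun m => ?_
  obtain ⟨r, s, hrs, hm⟩ := Finite.exists_ne_map_eq_of_infinite (fun r : R => r • m)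
  have hinj := Finite.injective_iff_surjective.mpr (hdiv (r - s) (sub_ne_zero.mpr hrs))
  exact hinj (show (r - s) • m = (r - s) • 0 by simp only [sub_smul, hm, sub_self, smul_zero])

theorem Submodule.eq_top_of_finite_quotient {R M : Type*} [Ring R] [Infinite R]
    [AddCommGroup M] [Module R M] (hdiv : ∀ a : R, a ≠ 0 → Surjective (a • · : M → M))
    (C : Submodule R M) [Finite (M ⧸ C)] : C = ⊤ := by
  rw [← Submodule.Quotient.subsingleton_iff]
  refine Module.subsingleton_of_finite_of_smul_surjective (R := R) fun a ha y => ?_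
  obtain ⟨z, rfl⟩ := C.mkQ_surjective y
  obtain ⟨w, rfl⟩ := hdiv a ha z
  exact ⟨C.mkQ w, (C.mkQ.map_smul a w).symm⟩

theorem smul_surjective_of_ne_zero {R K : Type*} [CommRing R] [Field K] [Algebra R K]
    [FaithfulSMul R K] {a : R} (ha : a ≠ 0) : Surjective (a • · : K → K) := by
  have ha' : algebraMap R K a ≠ 0 :=
    (map_ne_zero_iff _ (FaithfulSMul.algebraMap_injective R K)).mpr ha
  intro z
  exact ⟨(algebraMap R K a)⁻¹ * z, by
    simp only [Algebra.smul_def, ← mul_assoc, mul_inv_cancel₀ ha', one_mul]⟩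

theorem iUnion_submodule_ne_univ_of_finite {R K ι : Type*} [CommRing R] [IsDomain R]
    (hR : ¬IsField R) [Field K] [Algebra R K] [FaithfulSMul R K] [Finite ι]
    (C : ι → Submodule R K) (hC : ∀ i, C i ≠ ⊤) : ⋃ i, (C i : Set K) ≠ Set.univ := by
  have : Infinite R := not_finite_iff_infinite.mp fun _ => hR (Finite.isField_of_domain R)
  have := Fintype.ofFinite ι
  intro hcov
  obtain ⟨i, -, hi⟩ := Submodule.exists_finiteIndex_of_cover (s := Finset.univ) (p := C)
    (by simpa using hcov)
  have : Finite (K ⧸ C i) := AddSubgroup.finite_quotient_of_finiteIndex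
  exact hC i (Submodule.eq_top_of_finite_quotient (fun a ha => smul_surjective_of_ne_zero ha) _)

section PrimeDenominators

variable {R K : Type*} [CommRing R] [Field K] [Algebra R K] {p : R}

/-- The fractions of `p`-adic valuation at least `-n`. -/
def fractionsWithPrimeDenomPow (hp : Prime p) (n : ℕ) : Submodule R K where
  carrier := {x | ∃ b, ¬p ∣ b ∧ IsLocalization.IsInteger R ((b * p ^ n) • x)}
  zero_mem' := ⟨1, hp.not_dvd_one, by simpa using IsLocalization.isInteger_zero⟩
  add_mem' := by
    rintro x y ⟨b, hb, hx⟩ ⟨b', hb', hy⟩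
    refine ⟨b * b', fun h => (hp.dvd_or_dvd h).elim hb hb', ?_⟩
    have : (b * b' * p ^ n) • (x + y) = b' • ((b * p ^ n) • x) + b • ((b' * p ^ n) • y) :=
      by module
    rw [this]
    exact IsLocalization.isInteger_add (IsLocalization.isInteger_smul hx)
      (IsLocalization.isInteger_smul hy)
  smul_mem' := by
    rintro r x ⟨b, hb, hx⟩
    exact ⟨b, hb, smul_comm (b * p ^ n) r x ▸ IsLocalization.isInteger_smul hx⟩

theorem fractionsWithPrimeDenomPow_ne_top [IsDomain R] [FaithfulSMul R K] (hp : Prime p) (n : ℕ) :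
    fractionsWithPrimeDenomPow (K := K) hp n ≠ ⊤ := by
  intro htop
  have hpn : algebraMap R K (p ^ (n + 1)) ≠ 0 :=
    (map_ne_zero_iff _ (FaithfulSMul.algebraMap_injective R K)).mpr (pow_ne_zero _ hp.ne_zero)
  obtain ⟨b, hb, c, hc⟩ :
      (algebraMap R K (p ^ (n + 1)))⁻¹ ∈ fractionsWithPrimeDenomPow hp n :=
    htop ▸ Submodule.mem_top
  rw [Algebra.smul_def, eq_mul_inv_iff_mul_eq₀ hpn, ← map_mul] at hc
  have : b * p ^ n = c * p * p ^ n := by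
    rw [mul_assoc, ← pow_succ']
    exact FaithfulSMul.algebraMap_injective R K hc.symm
  exact hb ⟨c, mul_right_cancel₀ (pow_ne_zero n hp.ne_zero) this |>.trans (mul_comm c p)⟩

theorem exists_mem_fractionsWithPrimeDenomPow [IsDomain R] [WfDvdMonoid R] [IsFractionRing R K]
    (hp : Prime p) (x : K) : ∃ n, x ∈ fractionsWithPrimeDenomPow hp n := by
  obtain ⟨⟨s, hs⟩, hx⟩ := IsLocalization.exists_integer_multiple (nonZeroDivisors R) x
  obtain ⟨k, b, hb, hsb⟩ :=
    WfDvdMonoid.max_power_factor' (nonZeroDivisors.ne_zero hs) hp.not_isUnit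
  exact ⟨k, b, hb, by rwa [mul_comm, ← hsb]⟩

end PrimeDenominators

theorem exists_iUnion_submodule_eq_univ_of_prime {R K : Type*} [CommRing R] [IsDomain R]
    [WfDvdMonoid R] [Field K] [Algebra R K] [IsFractionRing R K] {p : R} (hp : Prime p) :
    ∃ C : ℕ → Submodule R K, (∀ n, C n ≠ ⊤) ∧ ⋃ n, (C n : Set K) = Set.univ :=
  ⟨fractionsWithPrimeDenomPow hp, fractionsWithPrimeDenomPow_ne_top hp,
    Set.iUnion_eq_univ_iff.mpr (exists_mem_fractionsWithPrimeDenomPow hp)⟩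

theorem exists_prime_of_not_isField {R : Type*} [CommRing R] [IsDomain R]
    [IsPrincipalIdealRing R] (hR : ¬IsField R) : ∃ p : R, Prime p := by
  obtain ⟨P, hP, _⟩ := Ring.not_isField_iff_exists_prime.mp hR
  exact ⟨_, Submodule.IsPrincipal.prime_generator_of_isPrime P hP⟩

theorem fractionField_not_finite_union_but_countable_union
    (R : Type*) [CommRing R] [IsDomain R] [IsPrincipalIdealRing R]
    (hnf : ¬ IsField R) :
    (∀ (k : ℕ) (C : Fin k → Submodule R (FractionRing R)),
        (∀ i, C i ≠ ⊤) → (⋃ i, (C i : Set (FractionRing R))) ≠ Set.univ) ∧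
    (∃ C : ℕ → Submodule R (FractionRing R),
        (∀ n, C n ≠ ⊤) ∧ (⋃ n, (C n : Set (FractionRing R))) = Set.univ) := by
  obtain ⟨p, hp⟩ := exists_prime_of_not_isField hnf
  exact ⟨fun _ => iUnion_submodule_ne_univ_of_finite hnf,
    exists_iUnion_submodule_eq_univ_of_prime hp⟩
end

section
/- Let R be a PID with fraction field F, R ≠ F, and M a proper R-submodule of F. Then M + R·1 ≠ F. -/
/-!
If `M + R·1 = F`, write `1 / r = m + c` for a nonzero `r ∈ R`; then `1 - r c = r m ∈ M`, so every
nonzero `r` is invertible modulo the ideal `I = {x ∈ R | x·1 ∈ M}`. Either `I = 0`, and then every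
nonzero element of `R` is a unit, or `I` contains some nonzero `r`, and then `1 ∈ I`, so that
`R·1 ⊆ M` and `M = F`.
-/

theorem Ideal.eq_top_of_forall_span_singleton_sup_eq_top {R : Type*} [CommRing R] [Nontrivial R]
    (hR : ¬IsField R) {I : Ideal R} (h : ∀ r ≠ 0, Ideal.span {r} ⊔ I = ⊤) : I = ⊤ := by
  by_cases hI : I = ⊥
  · obtain ⟨r, hr, hr_unit⟩ := Ring.exists_not_isUnit_of_not_isField hR
    have hr_span := h r hr
    rw [hI, sup_bot_eq, Ideal.span_singleton_eq_top] at hr_span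
    exact absurd hr_span hr_unit
  · obtain ⟨r, hrI, hr⟩ := Submodule.exists_mem_ne_zero_of_ne_bot hI
    rw [← h r hr, sup_eq_right.mpr ((Ideal.span_singleton_le_iff_mem I).mpr hrI)]

theorem Submodule.span_singleton_sup_comap_eq_top {R A : Type*} [CommRing R] [CommRing A]
    [Algebra R A] {M : Submodule R A} (hM : M ⊔ span R {1} = ⊤) {r : R}
    (hr : IsUnit (algebraMap R A r)) :
    Ideal.span {r} ⊔ M.comap (Algebra.linearMap R A) = ⊤ := by
  obtain ⟨m, hm, _, hc, hmc⟩ := mem_sup.mp (hM ▸ mem_top : ↑hr.unit⁻¹ ∈ M ⊔ span R {(1 : A)})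
  obtain ⟨c, rfl⟩ := mem_span_singleton.mp hc
  have hrm : algebraMap R A (1 - r * c) = r • m := by
    have hr_inv : algebraMap R A r * ↑hr.unit⁻¹ = 1 := hr.mul_val_inv
    rw [← hmc, Algebra.smul_def] at hr_inv
    rw [Algebra.smul_def, map_sub, map_one, map_mul]
    linear_combination -hr_inv
  rw [Ideal.eq_top_iff_one]
  refine mem_sup.mpr ⟨r * c, Ideal.mem_span_singleton'.mpr ⟨c, mul_comm c r⟩, 1 - r * c, ?_, by ring⟩
  rw [mem_comap, Algebra.linearMap_apply, hrm]
  exact M.smul_mem r hm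

theorem submodule_sup_span_one_ne_top_general
    (R : Type*) [CommRing R] [IsDomain R]
    (hnf : ¬ IsField R)
    (M : Submodule R (FractionRing R)) (hM : M ≠ ⊤) :
    M ⊔ Submodule.span R {(1 : FractionRing R)} ≠ ⊤ := by
  intro htop
  have hI : M.comap (Algebra.linearMap R (FractionRing R)) = ⊤ :=
    Ideal.eq_top_of_forall_span_singleton_sup_eq_top hnf fun r hr =>
      Submodule.span_singleton_sup_comap_eq_top htop
        (IsFractionRing.to_map_ne_zero_of_mem_nonZeroDivisors
          (mem_nonZeroDivisors_of_ne_zero hr)).isUnit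
  have h1 : (1 : FractionRing R) ∈ M := by
    simpa using Submodule.eq_top_iff'.mp hI 1
  rw [sup_eq_left.mpr ((Submodule.span_singleton_le_iff_mem _ _).mpr h1)] at htop
  exact hM htop

theorem submodule_sup_span_one_ne_top
    (R : Type*) [CommRing R] [IsDomain R] [IsPrincipalIdealRing R]
    (hnf : ¬ IsField R)
    (M : Submodule R (FractionRing R)) (hM : M ≠ ⊤) :
    M ⊔ Submodule.span R {(1 : FractionRing R)} ≠ ⊤ :=
  submodule_sup_span_one_ne_top_general R hnf M hM
end
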